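/- arXiv:0906.5546 — 3 statements merged into one kernel-verified Lean document; each statement's English description precedes it below -/
import Mathlib

section
/- Let Y given X=x, W=w be uniform on (0, (x²+(w−x)²)^{−1}), so F(y|x,w) = y(x²+(w−x)²) for 0 < y < (x²+(w−x)²)^{−1}, and let W given X=x be N(x,1) with density f(w|x) = φ(w−x). Then ∫ F(y|x,w) (∂f(w|x)/∂x) dw = 0 for all (y,x) in the joint support, i.e. A-collapsibility over W holds, even though neither Y ⊥ W | X nor W ⊥ X holds. -/
/-!
After the substitution `t = w - x` the integrand becomes `t ↦ y (x² + t²) t φ(t)`, which is odd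
because the Gaussian density `φ` is even, so its integral over `ℝ` vanishes.
-/

open MeasureTheory

/-- No integrability is needed: `x ↦ -x` preserves the Bochner integral of every function. -/
theorem Function.Odd.integral_eq_zero {G E : Type*} [MeasurableSpace G] [AddGroup G]
    [MeasurableNeg G] [NormedAddCommGroup E] [NormedSpace ℝ E] {μ : Measure G}
    [μ.IsNegInvariant] {g : G → E} (hg : g.Odd) : ∫ x, g x ∂μ = 0 := by
  have h := integral_neg_eq_self g μ
  rw [funext hg, integral_neg] at h
  have h2 : (2 : ℝ) • ∫ x, g x ∂μ = 0 := by
    rw [two_smul]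
    nth_rewrite 1 [← h]
    exact neg_add_cancel _
  exact (smul_eq_zero.mp h2).resolve_left two_ne_zero

/-- With F(y|x,w) = y(x²+(w−x)²) (uniform response) and
f(w|x) = φ(w−x) (W|X=x ~ N(x,1), so ∂f(w|x)/∂x = (w−x)φ(w−x)), we have
∫ F(y|x,w) (∂f(w|x)/∂x) dw = 0 for all (y,x), i.e. A-collapsibility over W
holds, even though neither Y ⊥ W | X nor W ⊥ X holds. -/
theorem stmt_5
    (φ : ℝ → ℝ)
    (hφ : ∀ t, φ t = (Real.sqrt (2 * Real.pi))⁻¹ * Real.exp (-t ^ 2 / 2))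
    (F : ℝ → ℝ → ℝ → ℝ)
    (hF : ∀ y x w, F y x w = y * (x ^ 2 + (w - x) ^ 2))
    (f : ℝ → ℝ → ℝ)
    (hf : ∀ w x, f w x = φ (w - x))
    (hfderiv : ∀ w x, deriv (fun x' => f w x') x = (w - x) * φ (w - x)) :
    (∀ y x, (∫ w, F y x w * deriv (fun x' => f w x') x) = 0)
    ∧ ¬ (∀ y x w w', F y x w = F y x w')    -- Y ⊥ W | X fails
    ∧ ¬ (∀ w x x', f w x = f w x') := by    -- W ⊥ X fails
  have hφ_even : φ.Even := fun t => by simp only [hφ, even_two, Even.neg_pow]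
  refine ⟨fun y x => ?_, fun h => ?_, fun h => ?_⟩
  · set g : ℝ → ℝ := fun t => y * (x ^ 2 + t ^ 2) * (t * φ t)
    have hg_odd : g.Odd := fun t => by
      simp only [g, hφ_even t]
      ring
    calc ∫ w, F y x w * deriv (fun x' => f w x') x = ∫ w, g (w - x) := by
          simp only [hF, hfderiv, g]
      _ = ∫ t, g t := integral_sub_right_eq_self g x
      _ = 0 := hg_odd.integral_eq_zero
  · simpa [hF] using h 1 0 0 1
  · have hφ_lt : φ (-2) < φ 0 := by
      rw [hφ, hφ]
      exact mul_lt_mul_of_pos_left (Real.exp_lt_exp.mpr (by norm_num)) (by positivity)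
    have hφ_eq : φ 0 = φ (-2) := by simpa [hf] using h 0 0 2
    exact hφ_lt.ne' hφ_eq
end

section
/- Let W be binary with values in {1,2}. The distribution dependence function is collapsible over W if and only if it is both homogeneous over W and A-collapsible over W. That is, C^W = C_H^W ∩ C_A^W when W is binary. -/
theorem eq_and_eq_iff_eq_and_mul_add_mul_eq {R : Type*} [Semiring R] {a b m p q : R}
    (hpq : p + q = 1) : a = m ∧ b = m ↔ a = b ∧ a * p + b * q = m := by
  constructor
  · rintro ⟨rfl, rfl⟩
    exact ⟨rfl, by rw [← mul_add, hpq, mul_one]⟩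
  · rintro ⟨rfl, hm⟩
    rw [← mul_add, hpq, mul_one] at hm
    exact ⟨hm, hm⟩

theorem stmt_10_general
    (F1 F2 : ℝ → ℝ → ℝ)          -- F1 y x = F(y|x,1), F2 y x = F(y|x,2)
    (Fm : ℝ → ℝ → ℝ)             -- Fm y x = F(y|x)
    (f1 f2 : ℝ → ℝ)              -- conditional pmf of W given X = x
    (hpmf : ∀ x, f1 x + f2 x = 1) :
    -- collapsibility:
    (∀ y x, deriv (fun x' => F1 y x') x = deriv (fun x' => Fm y x') x
          ∧ deriv (fun x' => F2 y x') x = deriv (fun x' => Fm y x') x)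
    ↔ -- homogeneity:
      ((∀ y x, deriv (fun x' => F1 y x') x = deriv (fun x' => F2 y x') x)
      -- and A-collapsibility:
      ∧ (∀ y x, deriv (fun x' => F1 y x') x * f1 x
               + deriv (fun x' => F2 y x') x * f2 x
             = deriv (fun x' => Fm y x') x)) := by
  simp only [← forall_and]
  exact forall₂_congr fun _ x => eq_and_eq_iff_eq_and_mul_add_mul_eq (hpmf x)

/-- For a binary background variable W ∈ {1,2}, the distribution
dependence function is collapsible over W if and only if it is both homogeneous
over W and A-collapsible over W:  C^W = C_H^W ∩ C_A^W. -/
theorem stmt_10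
    (F1 F2 : ℝ → ℝ → ℝ)          -- F1 y x = F(y|x,1), F2 y x = F(y|x,2)
    (Fm : ℝ → ℝ → ℝ)             -- Fm y x = F(y|x)
    (f1 f2 : ℝ → ℝ)              -- conditional pmf of W given X = x
    (hpmf : ∀ x, f1 x + f2 x = 1)
    (hmix : ∀ y x, Fm y x = F1 y x * f1 x + F2 y x * f2 x)
    (hF1 : ∀ y, Differentiable ℝ (fun x => F1 y x))
    (hF2 : ∀ y, Differentiable ℝ (fun x => F2 y x))
    (hf1 : Differentiable ℝ f1) (hf2 : Differentiable ℝ f2) :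
    -- collapsibility:
    (∀ y x, deriv (fun x' => F1 y x') x = deriv (fun x' => Fm y x') x
          ∧ deriv (fun x' => F2 y x') x = deriv (fun x' => Fm y x') x)
    ↔ -- homogeneity:
      ((∀ y x, deriv (fun x' => F1 y x') x = deriv (fun x' => F2 y x') x)
      -- and A-collapsibility:
      ∧ (∀ y x, deriv (fun x' => F1 y x') x * f1 x
               + deriv (fun x' => F2 y x') x * f2 x
             = deriv (fun x' => Fm y x') x)) :=
  stmt_10_general F1 F2 Fm f1 f2 hpmf
end

section
/- Let X > 0 and W be real-valued with F(w|x) = Φ(w/x), so F_x(w|x) = −(w/x²)φ(w/x), and let Y given (X,W)=(x,w) be uniform on (w−x, w+x), so F(y|x,w) = (y+x−w)/(2x) and F_w(y|x,w) = −1/(2x) for w−x < y < w+x. Then ∫_{−∞}^{∞} F_w(y|x,w) F_x(w|x) dw = 0 for all (y,x) in the support, so A-collapsibility of the quantile regression coefficient over W holds, even though neither Y ⊥ W | X nor W ⊥ X holds. -/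
/-! The integrand `w ↦ F_w(y|x,w) F_x(w|x)` is odd in `w`, because `F_w` does not depend on `w`
and `w ↦ w φ(w/x)` is odd, so its integral over the line vanishes. Dependence of `Y` on `W`
given `X` is read off two values of the uniform cdf, and dependence of `W` on `X` from
`Φ(1/2) < Φ(1)`, the Gaussian density being positive. -/

open MeasureTheory ProbabilityTheory Set

-- No integrability is needed: `∫ f = ∫ f ∘ neg = -∫ f` holds also when both sides are junk.
theorem integral_eq_zero_of_odd {G E : Type*} [MeasurableSpace G] [AddGroup G] [MeasurableNeg G]
    [NormedAddCommGroup E] [NormedSpace ℝ E] (μ : Measure G) [μ.IsNegInvariant] {f : G → E}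
    (hf : ∀ x, f (-x) = -f x) : ∫ x, f x ∂μ = 0 := by
  have h := integral_neg_eq_self f μ
  simp only [hf, integral_neg] at h
  rw [neg_eq_iff_add_eq_zero, ← two_smul ℝ] at h
  exact (smul_eq_zero.mp h).resolve_left two_ne_zero

theorem gaussianPDFReal_zero_neg (v : NNReal) (x : ℝ) :
    gaussianPDFReal 0 v (-x) = gaussianPDFReal 0 v x := by
  simp [gaussianPDFReal]

theorem integral_Iic_lt_integral_Iic {f : ℝ → ℝ} (hf : Integrable f) {a b : ℝ} (hab : a < b)
    (hpos : ∀ t ∈ Ioo a b, 0 < f t) : ∫ t in Iic a, f t < ∫ t in Iic b, f t := by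
  have hsub : (∫ t in Iic b, f t) - ∫ t in Iic a, f t = ∫ t in a..b, f t :=
    intervalIntegral.integral_Iic_sub_Iic hf.integrableOn hf.integrableOn
  have hmid : 0 < ∫ t in a..b, f t :=
    intervalIntegral.intervalIntegral_pos_of_pos_on hf.intervalIntegrable hpos hab
  linarith

theorem stmt_15_general
    (φ Φ : ℝ → ℝ)
    (hφ : ∀ t, φ t = (Real.sqrt (2 * Real.pi))⁻¹ * Real.exp (-t ^ 2 / 2))
    (hΦ : ∀ t, Φ t = ∫ s in Set.Iic t, φ s)
    (F : ℝ → ℝ → ℝ → ℝ)          -- F y x w = F(y|x,w)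
    (Fwx : ℝ → ℝ → ℝ)            -- Fwx w x = F(w|x)
    (hFwx : ∀ w x, 0 < x → Fwx w x = Φ (w / x))
    (hF : ∀ y x w, 0 < x → w - x < y → y < w + x → F y x w = (y + x - w) / (2 * x)) :
    (∀ y x : ℝ, 0 < x →
      (∫ w, (-(1 / (2 * x))) * (-(w / x ^ 2) * φ (w / x))) = 0)
    ∧ ¬ (∀ y x w w', 0 < x → w - x < y → y < w + x → w' - x < y → y < w' + x →
          F y x w = F y x w')                           -- Y ⊥ W | X fails
    ∧ ¬ (∀ w x x', 0 < x → 0 < x' → Fwx w x = Fwx w x') := by  -- W ⊥ X fails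
  have hφ_eq : φ = gaussianPDFReal 0 1 := funext fun t => by simp [hφ, gaussianPDFReal]
  refine ⟨fun _ x _ => integral_eq_zero_of_odd volume fun w => ?_, fun hYW => ?_, fun hWX => ?_⟩
  · rw [hφ_eq, neg_div x w, gaussianPDFReal_zero_neg]
    ring
  · have h := hYW 0 1 0 (1 / 2) one_pos (by norm_num) (by norm_num) (by norm_num) (by norm_num)
    rw [hF 0 1 0 one_pos (by norm_num) (by norm_num),
      hF 0 1 (1 / 2) one_pos (by norm_num) (by norm_num)] at h
    norm_num at h
  · have h := hWX 1 1 2 one_pos two_pos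
    rw [hFwx 1 1 one_pos, hFwx 1 2 two_pos, hΦ, hΦ, div_one] at h
    refine (integral_Iic_lt_integral_Iic ?_ (by norm_num : (1 / 2 : ℝ) < 1) ?_).ne' h
    · exact hφ_eq ▸ integrable_gaussianPDFReal 0 1
    · exact fun t _ => hφ_eq ▸ gaussianPDFReal_pos 0 1 t one_ne_zero

/-- With X > 0, F(w|x) = Φ(w/x) so F_x(w|x) = −(w/x²)φ(w/x), and
Y|(X,W)=(x,w) uniform on (w−x,w+x) so F(y|x,w) = (y+x−w)/(2x) and
F_w(y|x,w) = −1/(2x), we get ∫ F_w(y|x,w) F_x(w|x) dw = 0 on the support, so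
A-collapsibility of the quantile regression coefficient over W holds, even
though neither Y ⊥ W | X nor W ⊥ X holds. -/
theorem stmt_15
    (φ Φ : ℝ → ℝ)
    (hφ : ∀ t, φ t = (Real.sqrt (2 * Real.pi))⁻¹ * Real.exp (-t ^ 2 / 2))
    (hΦ : ∀ t, Φ t = ∫ s in Set.Iic t, φ s)
    (F : ℝ → ℝ → ℝ → ℝ)          -- F y x w = F(y|x,w)
    (Fwx : ℝ → ℝ → ℝ)            -- Fwx w x = F(w|x)
    (hFwx : ∀ w x, 0 < x → Fwx w x = Φ (w / x))
    (hF : ∀ y x w, 0 < x → w - x < y → y < w + x → F y x w = (y + x - w) / (2 * x))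
    -- the stated partial derivatives:
    (hFx : ∀ w x, 0 < x →
      deriv (fun x' => Fwx w x') x = -(w / x ^ 2) * φ (w / x))
    (hFw : ∀ y x w, 0 < x → w - x < y → y < w + x →
      deriv (fun w' => F y x w') w = -(1 / (2 * x))) :
    (∀ y x : ℝ, 0 < x →
      (∫ w, (-(1 / (2 * x))) * (-(w / x ^ 2) * φ (w / x))) = 0)
    ∧ ¬ (∀ y x w w', 0 < x → w - x < y → y < w + x → w' - x < y → y < w' + x →
          F y x w = F y x w')                           -- Y ⊥ W | X fails
    ∧ ¬ (∀ w x x', 0 < x → 0 < x' → Fwx w x = Fwx w x') :=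
  stmt_15_general φ Φ hφ hΦ F Fwx hFwx hF
end
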